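/- Let G = (V,E) be a graph and let G' be the subdivision-plus-gadget graph from the reduction. If D' is a total dominating set of G' of size k', then D' ∩ V is a vertex cover of G of size at most k' − 2|V|. -/

import Mathlib

/-- Gadget indices: 0 ↦ v₁, 1 ↦ v₂, 2 ↦ v₃, 3 ↦ v₄. -/
abbrev RedV (V : Type*) (G : SimpleGraph V) := V ⊕ G.edgeSet ⊕ (V × Fin 4)

/-- The subdivision-plus-gadget graph G' of the NP-hardness reduction: each edge {u,w}
of G is replaced by a path u – e_{uw} – w, and each vertex v of G receives a pendant
path v – v₁ – v₂ – v₄ together with an extra leaf v₃ attached to v₁. -/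
def redGraph {V : Type*} (G : SimpleGraph V) : SimpleGraph (RedV V G) :=
  SimpleGraph.fromRel (fun a b =>
    match a, b with
    | Sum.inl u, Sum.inr (Sum.inl e) => u ∈ e.1
    | Sum.inl u, Sum.inr (Sum.inr (w, i)) => u = w ∧ i = 0
    | Sum.inr (Sum.inr (w, i)), Sum.inr (Sum.inr (w', j)) =>
        w = w' ∧ ((i = 0 ∧ j = 1) ∨ (i = 0 ∧ j = 2) ∨ (i = 1 ∧ j = 3))
    | _, _ => False)

/-!
The subdivision vertex of an edge `uw` has neighbours `u` and `w` only, so a total dominating set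
contains one of them. The leaves `v₃` and `v₄` have the single neighbours `v₁` and `v₂`, so all
`2|V|` vertices `v₁, v₂` lie in the dominating set as well, and they lie outside `V`.
-/

open Set SimpleGraph

theorem Set.ncard_preimage_inl_add_ncard_preimage_inr {α β : Type*} {s : Set (α ⊕ β)}
    (hs : s.Finite) : (Sum.inl ⁻¹' s).ncard + (Sum.inr ⁻¹' s).ncard = s.ncard := by
  conv_rhs => rw [← image_preimage_inl_union_image_preimage_inr s]
  rw [ncard_union_eq disjoint_image_inl_image_inr ((hs.preimage Sum.inl_injective.injOn).image _)
    ((hs.preimage Sum.inr_injective.injOn).image _), ncard_image_of_injective _ Sum.inl_injective,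
    ncard_image_of_injective _ Sum.inr_injective]

namespace SimpleGraph

variable {α : Type*}

def IsTotalDominatingSet (H : SimpleGraph α) (D : Set α) : Prop :=
  ∀ x, ∃ d ∈ D, H.Adj x d

theorem IsTotalDominatingSet.mem_of_forall_adj_eq {H : SimpleGraph α} {D : Set α} {x y : α}
    (hD : H.IsTotalDominatingSet D) (hx : ∀ z, H.Adj x z → z = y) : y ∈ D := by
  obtain ⟨d, hdD, hxd⟩ := hD x
  exact hx d hxd ▸ hdD

end SimpleGraph

section Reduction

variable {V : Type*} {G : SimpleGraph V}

theorem redGraph_adj_edgeVertex {e : G.edgeSet} {x : RedV V G}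
    (h : (redGraph G).Adj (Sum.inr (Sum.inl e)) x) : ∃ u ∈ e.1, x = Sum.inl u := by
  rw [redGraph, fromRel_adj] at h
  rcases x with u | e' | ⟨w, i⟩ <;> simp_all

theorem redGraph_adj_gadget_two {v : V} {x : RedV V G}
    (h : (redGraph G).Adj (Sum.inr (Sum.inr (v, 2))) x) : x = Sum.inr (Sum.inr (v, 0)) := by
  rw [redGraph, fromRel_adj] at h
  rcases x with u | e' | ⟨w, i⟩ <;> simp_all

theorem redGraph_adj_gadget_three {v : V} {x : RedV V G}
    (h : (redGraph G).Adj (Sum.inr (Sum.inr (v, 3))) x) : x = Sum.inr (Sum.inr (v, 1)) := by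
  rw [redGraph, fromRel_adj] at h
  rcases x with u | e' | ⟨w, i⟩ <;> simp_all

theorem isVertexCover_preimage_inl_of_isTotalDominatingSet {D : Set (RedV V G)}
    (hD : (redGraph G).IsTotalDominatingSet D) : G.IsVertexCover (Sum.inl ⁻¹' D) := by
  intro u w huw
  obtain ⟨d, hdD, hadj⟩ := hD (Sum.inr (Sum.inl ⟨s(u, w), huw⟩))
  obtain ⟨x, hx, rfl⟩ := redGraph_adj_edgeVertex hadj
  rcases Sym2.mem_iff.mp hx with rfl | rfl
  · exact Or.inl hdD
  · exact Or.inr hdD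

theorem two_mul_card_le_ncard_preimage_inr [Finite V] {D : Set (RedV V G)}
    (hD : (redGraph G).IsTotalDominatingSet D) : 2 * Nat.card V ≤ (Sum.inr ⁻¹' D).ncard := by
  have hgadget : (univ ×ˢ {0, 1} : Set (V × Fin 4)) ⊆ Sum.inr ⁻¹' (Sum.inr ⁻¹' D) := by
    rintro ⟨v, i⟩ ⟨-, rfl | rfl⟩
    · exact hD.mem_of_forall_adj_eq fun _ => redGraph_adj_gadget_two
    · exact hD.mem_of_forall_adj_eq fun _ => redGraph_adj_gadget_three
  calc 2 * Nat.card V = (univ ×ˢ {0, 1} : Set (V × Fin 4)).ncard := by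
        rw [ncard_prod, ncard_univ, ncard_pair (by decide), mul_comm]
    _ ≤ (Sum.inr ⁻¹' (Sum.inr ⁻¹' D)).ncard := ncard_le_ncard hgadget (toFinite _)
    _ ≤ (Sum.inr ⁻¹' D).ncard :=
        le_add_self.trans (ncard_preimage_inl_add_ncard_preimage_inr (toFinite _)).le

end Reduction

/-- if D' is a total dominating set of G' of size k', then D' ∩ V is a
vertex cover of G of size at most k' − 2|V|. -/
theorem tds_gives_vertexCover {V : Type*} [Fintype V] (G : SimpleGraph V)
    (D : Set (RedV V G)) (k' : ℕ) (hcard : D.ncard = k')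
    (hD : ∀ x : RedV V G, ∃ d ∈ D, (redGraph G).Adj x d) :
    (∀ u w : V, G.Adj u w → Sum.inl u ∈ D ∨ Sum.inl w ∈ D) ∧
      {u : V | Sum.inl u ∈ D}.ncard ≤ k' - 2 * Nat.card V := by
  have hTD : (redGraph G).IsTotalDominatingSet D := hD
  refine ⟨fun u w huw => isVertexCover_preimage_inl_of_isTotalDominatingSet hTD huw, ?_⟩
  have hsplit := ncard_preimage_inl_add_ncard_preimage_inr (toFinite D)
  have hgadgets := two_mul_card_le_ncard_preimage_inr hTD
  change (Sum.inl ⁻¹' D).ncard ≤ k' - 2 * Nat.card V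
  omega
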